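/- arXiv:1910.11004 — 6 statements merged into one kernel-verified Lean document; each statement's English description precedes it below -/
import Mathlib

section
/- For all real numbers a > 0 and b ≥ 0, the limit as k → ∞ of the product ∏_{i=1}^{k} ((a+6i−4)(a+3b+6i−2)) / ((a+6i−2)(a+3b+6i−4)) exists and equals Γ(a/6+2/3)Γ(a/6+b/2+1/3) / (Γ(a/6+1/3)Γ(a/6+b/2+2/3)), where Γ is the Gamma function. -/
/-!
With `i = j + 1`, the `i`-th factor is `(x₁ + j)(x₄ + j) / ((x₂ + j)(x₃ + j))` for
`x₁ = a/6 + 1/3`, `x₂ = a/6 + 2/3`, `x₃ = a/6 + b/2 + 1/3`, `x₄ = a/6 + b/2 + 2/3`, and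
`x₁ + x₄ = x₂ + x₃`. Hence the partial products are ratios of Euler's sequences
`n ^ x * n! / ∏_{j ≤ n} (x + j)`, whose powers of `n` and factorials cancel, and Euler's limit
formula for `Γ` gives the limit.
-/

open Filter Finset Topology
open scoped Nat

namespace Real

theorem GammaSeq_mul_div_GammaSeq_mul {x₁ x₂ x₃ x₄ : ℝ} (hsum : x₁ + x₄ = x₂ + x₃) {n : ℕ}
    (hn : n ≠ 0) :
    GammaSeq x₂ n * GammaSeq x₃ n / (GammaSeq x₁ n * GammaSeq x₄ n) =
      ∏ j ∈ range (n + 1), (x₁ + j) * (x₄ + j) / ((x₂ + j) * (x₃ + j)) := by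
  have hnpos : (0 : ℝ) < n := by positivity
  have hnum : (n : ℝ) ^ x₂ * n ! * ((n : ℝ) ^ x₃ * n !) =
      (n : ℝ) ^ x₁ * n ! * ((n : ℝ) ^ x₄ * n !) := by
    rw [mul_mul_mul_comm, mul_mul_mul_comm ((n : ℝ) ^ x₁), ← rpow_add hnpos,
      ← rpow_add hnpos, hsum]
  have hnum_ne : (n : ℝ) ^ x₂ * n ! * ((n : ℝ) ^ x₃ * n !) ≠ 0 := by positivity
  -- No factor `x + j` has to be nonzero: `c / p / (c / q) = q / p` holds for all `p`, `q`.
  simp only [GammaSeq, prod_div_distrib, prod_mul_distrib]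
  rw [div_mul_div_comm, div_mul_div_comm, ← hnum, div_div_div_cancel_left' _ _ hnum_ne]

theorem tendsto_prod_range_div_Gamma {x₁ x₂ x₃ x₄ : ℝ} (hsum : x₁ + x₄ = x₂ + x₃)
    (h₁ : Gamma x₁ ≠ 0) (h₄ : Gamma x₄ ≠ 0) :
    Tendsto (fun n : ℕ => ∏ j ∈ range n, (x₁ + j) * (x₄ + j) / ((x₂ + j) * (x₃ + j))) atTop
      (𝓝 (Gamma x₂ * Gamma x₃ / (Gamma x₁ * Gamma x₄))) := by
  rw [← tendsto_add_atTop_iff_nat 1]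
  have hlim := ((GammaSeq_tendsto_Gamma x₂).mul (GammaSeq_tendsto_Gamma x₃)).div
    ((GammaSeq_tendsto_Gamma x₁).mul (GammaSeq_tendsto_Gamma x₄)) (mul_ne_zero h₁ h₄)
  refine hlim.congr' ?_
  filter_upwards [eventually_ne_atTop 0] with n hn
  exact GammaSeq_mul_div_GammaSeq_mul hsum hn

end Real

theorem stmt1 (a b : ℝ) (ha : 0 < a) (hb : 0 ≤ b) :
    Tendsto
      (fun k : ℕ => ∏ i ∈ Finset.Icc 1 k,
        ((a + 6 * i - 4) * (a + 3 * b + 6 * i - 2)) /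
          ((a + 6 * i - 2) * (a + 3 * b + 6 * i - 4)))
      atTop
      (nhds (Real.Gamma (a / 6 + 2 / 3) * Real.Gamma (a / 6 + b / 2 + 1 / 3) /
        (Real.Gamma (a / 6 + 1 / 3) * Real.Gamma (a / 6 + b / 2 + 2 / 3)))) := by
  set x₁ := a / 6 + 1 / 3
  set x₂ := a / 6 + 2 / 3
  set x₃ := a / 6 + b / 2 + 1 / 3
  set x₄ := a / 6 + b / 2 + 2 / 3
  have hfactor (j : ℕ) :
      (a + 6 * ((j + 1 : ℕ) : ℝ) - 4) * (a + 3 * b + 6 * ((j + 1 : ℕ) : ℝ) - 2) /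
          ((a + 6 * ((j + 1 : ℕ) : ℝ) - 2) * (a + 3 * b + 6 * ((j + 1 : ℕ) : ℝ) - 4)) =
        (x₁ + j) * (x₄ + j) / ((x₂ + j) * (x₃ + j)) := by
    have h₁ : a + 6 * ((j + 1 : ℕ) : ℝ) - 4 = 6 * (x₁ + j) := by push_cast; ring
    have h₂ : a + 6 * ((j + 1 : ℕ) : ℝ) - 2 = 6 * (x₂ + j) := by push_cast; ring
    have h₃ : a + 3 * b + 6 * ((j + 1 : ℕ) : ℝ) - 4 = 6 * (x₃ + j) := by push_cast; ring
    have h₄ : a + 3 * b + 6 * ((j + 1 : ℕ) : ℝ) - 2 = 6 * (x₄ + j) := by push_cast; ring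
    rw [h₁, h₂, h₃, h₄, mul_mul_mul_comm 6 (x₁ + j), mul_mul_mul_comm 6 (x₂ + j),
      mul_div_mul_left _ _ (by norm_num : (6 : ℝ) * 6 ≠ 0)]
  have hprod (k : ℕ) : ∏ i ∈ Icc 1 k, ((a + 6 * i - 4) * (a + 3 * b + 6 * i - 2)) /
      ((a + 6 * i - 2) * (a + 3 * b + 6 * i - 4)) =
        ∏ j ∈ range k, (x₁ + j) * (x₄ + j) / ((x₂ + j) * (x₃ + j)) := by
    rw [← Ico_add_one_right_eq_Icc, prod_Ico_eq_prod_range, Nat.add_sub_cancel]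
    exact prod_congr rfl fun j _ => by rw [add_comm 1 j, hfactor]
  simp only [hprod]
  exact Real.tendsto_prod_range_div_Gamma (by ring)
    (Real.Gamma_pos_of_pos (by positivity)).ne' (Real.Gamma_pos_of_pos (by positivity)).ne'
end

section
/- Let B be an n×n matrix over a commutative ring, let S ⊆ {1, …, n}, let D be the diagonal matrix whose (i,i)-entry is 1 if i ∈ S and 0 otherwise, and let x be a scalar. Then det(xD + B) = Σ_{T ⊆ S} x^{|T|} · det(B_{T^c}), where B_{T^c} is the principal submatrix of B obtained by deleting the rows and columns with indices in T (with the convention that the determinant of the empty matrix is 1). -/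
open Matrix Finset

namespace Matrix

variable {n R : Type*} [Fintype n] [DecidableEq n] [CommRing R]

theorem det_piecewise_one_row_eq_det_submatrix_compl (B : Matrix n n R) (T : Finset n) :
    det (of (T.piecewise (1 : Matrix n n R).row B.row)) =
      det (B.submatrix (Subtype.val : {i // i ∈ Tᶜ} → n) Subtype.val) := by
  rw [← piecewise_compl]
  exact det_piecewise_one_eq_submatrix_det B Tᶜ

/-- Row `i` is `d i • eᵢ + B i`; expanding multilinearly, each choice `T` of rows `d i • eᵢ`
contributes `∏ i ∈ T, d i` times the principal minor on `Tᶜ`. -/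
theorem det_diagonal_add (d : n → R) (B : Matrix n n R) :
    det (diagonal d + B) =
      ∑ T : Finset n, (∏ i ∈ T, d i) *
        det (B.submatrix (Subtype.val : {i // i ∈ Tᶜ} → n) Subtype.val) := by
  have hrow (T : Finset n) : T.piecewise (diagonal d).row B.row =
      T.piecewise (fun i => d i • T.piecewise (1 : Matrix n n R).row B.row i)
        (T.piecewise (1 : Matrix n n R).row B.row) := by
    ext i j
    by_cases hi : i ∈ T <;> simp [hi, diagonal_apply, one_apply]
  calc det (diagonal d + B)
      = detRowAlternating ((diagonal d).row + B.row) := rfl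
    _ = ∑ T : Finset n, detRowAlternating (T.piecewise (diagonal d).row B.row) :=
        detRowAlternating.map_add_univ _ _
    _ = _ := by
        refine sum_congr rfl fun T _ => ?_
        rw [hrow, ← det_piecewise_one_row_eq_det_submatrix_compl]
        exact detRowAlternating.toMultilinearMap.map_piecewise_smul _ _ T

end Matrix

theorem stmt5 (n : ℕ) (R : Type*) [CommRing R]
    (B : Matrix (Fin n) (Fin n) R) (S : Finset (Fin n)) (x : R) :
    Matrix.det (x • Matrix.diagonal (fun i => if i ∈ S then (1 : R) else 0) + B) =
      ∑ T ∈ S.powerset, x ^ T.card *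
        Matrix.det (B.submatrix (Subtype.val : {i // i ∈ Tᶜ} → Fin n) Subtype.val) := by
  have hprod (T : Finset (Fin n)) :
      ∏ i ∈ T, (x • fun i => if i ∈ S then (1 : R) else 0) i =
        if T ⊆ S then x ^ T.card else 0 := by
    split_ifs with hTS
    · rw [← prod_const]
      exact prod_congr rfl fun i hi => by simp [hTS hi]
    · obtain ⟨i, hiT, hiS⟩ := not_subset.mp hTS
      exact prod_eq_zero hiT (by simp [hiS])
  rw [← diagonal_smul, det_diagonal_add]
  simp_rw [hprod, ite_mul, zero_mul]
  rw [sum_ite, sum_const_zero, add_zero, filter_subset_univ]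
end

section
/- Let s be a positive integer, let i_1 < ⋯ < i_s and j_1 < ⋯ < j_s be positive integers, and let a_1, …, a_s be independent variables. Then the determinant of the s×s matrix whose (u,v)-entry is C(a_u + i_u + j_v − 2, j_v − 1), viewed as a polynomial in a_1, …, a_s over ℚ, is divisible by the product ∏_{1 ≤ u < v ≤ s} ((a_v + i_v) − (a_u + i_u)). -/
/-!
Each entry of row `u` is the value at `y_u = a_u + i_u` of a fixed polynomial `p_v`, so
subtracting row `u` from row `v` makes row `v` divisible by `y_v - y_u`, since `y_v - y_u` divides
`p(y_v) - p(y_u)`. The factors `y_v - y_u` are linear, hence irreducible, and two of them for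
different pairs `u < v` do not divide each other, so in the factorial ring `ℚ[a_1, …, a_s]`
their product divides the determinant too.
-/

open MvPolynomial Finset

namespace Matrix

variable {n R : Type*} [Fintype n] [DecidableEq n] [CommRing R]

theorem dvd_det_of_dvd_sub_row (A : Matrix n n R) {i j : n} (hij : i ≠ j) {d : R}
    (h : ∀ k, d ∣ A i k - A j k) : d ∣ A.det := by
  choose q hq using h
  have hrow : A i + (-1 : R) • A j = d • q := by
    ext k
    simp [← hq k, sub_eq_add_neg]
  rw [← det_updateRow_add_smul_self A hij (-1), hrow, det_updateRow_smul]
  exact dvd_mul_right _ _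

theorem sub_dvd_det_of_eval (p : n → Polynomial R) (y : n → R) {i j : n} (hij : i ≠ j) :
    y i - y j ∣ (of fun a b => (p b).eval (y a)).det :=
  dvd_det_of_dvd_sub_row _ hij fun _ => Polynomial.sub_dvd_eval_sub _ _ _

theorem prod_sub_dvd_det_of_eval [LinearOrder n] [DecompositionMonoid R]
    (p : n → Polynomial R) (y : n → R)
    (hy : ∀ u v u' v', u < v → u' < v' → (u, v) ≠ (u', v') →
      IsRelPrime (y v - y u) (y v' - y u')) :
    (∏ u, ∏ v ∈ univ.filter (u < ·), (y v - y u)) ∣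
      (of fun a b => (p b).eval (y a)).det := by
  have hprod : (∏ u, ∏ v ∈ univ.filter (u < ·), (y v - y u)) =
      ∏ b ∈ univ.filter (fun b : n × n => b.1 < b.2), (y b.2 - y b.1) := by
    rw [prod_filter, ← univ_product_univ, prod_product]
    simp only [prod_filter]
  rw [hprod]
  refine prod_dvd_of_isRelPrime ?_ fun b hb => sub_dvd_det_of_eval p y (mem_filter.1 hb).2.ne'
  intro b hb b' hb' hne
  exact hy _ _ _ _ (mem_filter.1 hb).2 (mem_filter.1 hb').2 hne

end Matrix

namespace MvPolynomial

variable {σ R : Type*} [CommRing R] (c : σ → R)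

theorem coeff_single_shifted_X_sub {u v : σ} (huv : u ≠ v) :
    (X v + C (c v) - (X u + C (c u)) : MvPolynomial σ R).coeff (Finsupp.single v 1) = 1 := by
  classical
  have h0 : (0 : σ →₀ ℕ) ≠ Finsupp.single v 1 := (Finsupp.single_ne_zero.2 one_ne_zero).symm
  simp [coeff_X, h0, Finsupp.single_left_inj, huv]

theorem totalDegree_shifted_X_sub [Nontrivial R] {u v : σ} (huv : u ≠ v) :
    (X v + C (c v) - (X u + C (c u)) : MvPolynomial σ R).totalDegree = 1 := by
  refine le_antisymm ?_ ?_
  · refine (totalDegree_sub _ _).trans (max_le ?_ ?_) <;>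
      exact (totalDegree_add _ _).trans (by simp)
  · refine le_trans (by simp) (le_totalDegree (s := Finsupp.single v 1) ?_)
    simp [mem_support_iff, coeff_single_shifted_X_sub c huv]

theorem irreducible_shifted_X_sub [IsDomain R] {u v : σ} (huv : u ≠ v) :
    Irreducible (X v + C (c v) - (X u + C (c u)) : MvPolynomial σ R) :=
  irreducible_of_totalDegree_eq_one (totalDegree_shifted_X_sub c huv) fun _ hx =>
    isUnit_of_dvd_one (coeff_single_shifted_X_sub c huv ▸ hx _)

theorem shifted_X_sub_not_dvd [Nontrivial R] {u v u' v' w : σ} (hwu : w ≠ u) (hwv : w ≠ v)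
    (hw : w = u' ∨ w = v') (huv' : u' ≠ v') :
    ¬ (X v + C (c v) - (X u + C (c u)) : MvPolynomial σ R) ∣
      X v' + C (c v') - (X u' + C (c u')) := by
  classical
  intro hdvd
  -- at this point the divisor vanishes while the dividend is `±1`
  set x : σ → R := fun t => (if t = w then 1 else 0) - c t
  have heval : ∀ t, eval x (X t + C (c t)) = if t = w then 1 else 0 := fun t => by simp [x]
  have := map_dvd (eval x) hdvd
  rcases hw with rfl | rfl <;> simp_all [Ne.symm]

theorem isRelPrime_shifted_X_sub [LinearOrder σ] [IsDomain R] {u v u' v' : σ} (huv : u < v)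
    (huv' : u' < v') (hne : (u, v) ≠ (u', v')) :
    IsRelPrime (X v + C (c v) - (X u + C (c u)) : MvPolynomial σ R)
      (X v' + C (c v') - (X u' + C (c u'))) := by
  obtain ⟨w, hwu, hwv, hw⟩ : ∃ w, w ≠ u ∧ w ≠ v ∧ (w = u' ∨ w = v') := by
    by_contra! h
    have hu' : u' = u ∨ u' = v := by
      by_contra! h'
      exact (h u' h'.1 h'.2).1 rfl
    have hv' : v' = u ∨ v' = v := by
      by_contra! h'
      exact (h v' h'.1 h'.2).2 rfl
    rcases hu' with rfl | rfl <;> rcases hv' with rfl | rfl <;> simp_all [lt_asymm huv]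
  exact (irreducible_shifted_X_sub c huv.ne).isRelPrime_iff_not_dvd.2
    (shifted_X_sub_not_dvd c hwu hwv hw huv'.ne)

end MvPolynomial

theorem stmt7_general (s : ℕ)
    (i j : Fin s → ℕ) :
    (∏ u : Fin s, ∏ v ∈ Finset.univ.filter (fun v : Fin s => u < v),
        ((MvPolynomial.X v + MvPolynomial.C ((i v : ℚ))) -
          (MvPolynomial.X u + MvPolynomial.C ((i u : ℚ))))) ∣
      Matrix.det (Matrix.of fun u v : Fin s =>
        MvPolynomial.C (1 / (Nat.factorial (j v - 1) : ℚ)) *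
          ∏ t ∈ Finset.range (j v - 1),
            (MvPolynomial.X u + MvPolynomial.C ((i u : ℚ) + (j v : ℚ) - 2 - (t : ℚ)))) := by
  -- `p v` is `C(x + j v - 2, j v - 1)`, to be evaluated at `x = a_u + i_u`
  set p : Fin s → Polynomial (MvPolynomial (Fin s) ℚ) := fun v =>
    Polynomial.C (C (1 / (j v - 1).factorial : ℚ)) *
      ∏ t ∈ range (j v - 1), (Polynomial.X + Polynomial.C (C ((j v : ℚ) - 2 - t)))
  have hentries : Matrix.of (fun u v : Fin s =>
      C (1 / (j v - 1).factorial : ℚ) *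
        ∏ t ∈ range (j v - 1), (X u + C ((i u : ℚ) + (j v : ℚ) - 2 - t))) =
      Matrix.of fun u v => (p v).eval (X u + C (i u : ℚ)) := by
    ext u v : 1
    simp only [p, Matrix.of_apply, Polynomial.eval_mul, Polynomial.eval_C, Polynomial.eval_prod,
      Polynomial.eval_add, Polynomial.eval_X, add_assoc, ← C_add]
    ring_nf
  rw [hentries]
  exact Matrix.prod_sub_dvd_det_of_eval p _ fun _ _ _ _ huv huv' hne =>
    isRelPrime_shifted_X_sub (fun u => (i u : ℚ)) huv huv' hne

theorem stmt7 (s : ℕ) (hs : 0 < s)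
    (i j : Fin s → ℕ) (hi : StrictMono i) (hj : StrictMono j)
    (hipos : ∀ u, 0 < i u) (hjpos : ∀ v, 0 < j v) :
    (∏ u : Fin s, ∏ v ∈ Finset.univ.filter (fun v : Fin s => u < v),
        ((MvPolynomial.X v + MvPolynomial.C ((i v : ℚ))) -
          (MvPolynomial.X u + MvPolynomial.C ((i u : ℚ))))) ∣
      Matrix.det (Matrix.of fun u v : Fin s =>
        MvPolynomial.C (1 / (Nat.factorial (j v - 1) : ℚ)) *
          ∏ t ∈ Finset.range (j v - 1),
            (MvPolynomial.X u + MvPolynomial.C ((i u : ℚ) + (j v : ℚ) - 2 - (t : ℚ)))) :=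
  stmt7_general s i j
end

section
/- Define Δ(x_1, …, x_n) = ∏_{1 ≤ i < j ≤ n} (x_j − x_i). Then for any positive integers n, l and strictly increasing positive integers i_1 < i_2 < ⋯ < i_l, one has Δ(1, …, n, n+i_1, …, n+i_l) / Δ(1, …, n, n+1, …, n+l) = [ ∏_{j=1}^{l} Δ(1,…,n, n+i_j) / Δ(1,…,n, n+j) ] · Δ(n+i_1, …, n+i_l) / Δ(n+1, …, n+l). -/
/-!
The Vandermonde product of a concatenation `A ++ B` is `Δ(A) Δ(B)` times the cross product
`∏_{a ∈ A, b ∈ B} (b - a)`. For `B = (x_1, …, x_l)` the cross product factors over the `x_t`,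
and each factor `∏_{a ∈ A} (x_t - a)` is exactly `Δ(A, x_t) / Δ(A)`. Hence both sides of the
identity are the same product once the factors `Δ(A)` cancel; the denominators are nonzero
because the lists `1, …, n` and `n + 1, …, n + l` have distinct entries and are disjoint.
-/

/-- The Vandermonde product `Δ(x_1, …, x_n) = ∏_{1 ≤ i < j ≤ n} (x_j − x_i)` of a
list of rationals. -/
def vprod : List ℚ → ℚ
  | [] => 1
  | x :: xs => ((xs.map (fun y => y - x)).prod) * vprod xs

/-- The list `1, 2, …, n`. -/
def baseList (n : ℕ) : List ℚ := (List.range n).map (fun t => ((t : ℚ) + 1))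

lemma vprod_cons (x : ℚ) (xs : List ℚ) :
    vprod (x :: xs) = (xs.map (fun y => y - x)).prod * vprod xs := rfl

lemma vprod_append (A B : List ℚ) :
    vprod (A ++ B) = vprod A * vprod B * (A.map fun a => (B.map fun b => b - a).prod).prod := by
  induction A with
  | nil => simp [vprod]
  | cons x A ih =>
    simp only [List.cons_append, vprod_cons, ih, List.map_append, List.prod_append,
      List.map_cons, List.prod_cons]
    ring

lemma vprod_append_singleton (A : List ℚ) (x : ℚ) :
    vprod (A ++ [x]) = vprod A * (A.map fun a => x - a).prod := by
  simp [vprod_append, vprod]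

lemma vprod_ne_zero {L : List ℚ} (h : L.Nodup) : vprod L ≠ 0 := by
  induction L with
  | nil => simp [vprod]
  | cons x xs ih =>
    rw [List.nodup_cons] at h
    refine mul_ne_zero (List.prod_ne_zero ?_) (ih h.2)
    simp only [List.mem_map, not_exists, not_and]
    intro y hy hyx
    exact h.1 (sub_eq_zero.1 hyx ▸ hy)

lemma prod_map_sub_ne_zero {A : List ℚ} {x : ℚ} (hx : x ∉ A) :
    (A.map fun a => x - a).prod ≠ 0 := by
  refine List.prod_ne_zero ?_
  simp only [List.mem_map, not_exists, not_and]
  intro a ha hxa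
  exact hx (sub_eq_zero.1 hxa ▸ ha)

lemma List.prod_map_finsetProd {ι α M : Type*} [Fintype ι] [CommMonoid M] (A : List α)
    (f : ι → α → M) : (A.map fun a => ∏ t, f t a).prod = ∏ t, (A.map (f t)).prod := by
  induction A with
  | nil => simp
  | cons a A ih => simp only [List.map_cons, List.prod_cons, ih, Finset.prod_mul_distrib]

lemma vprod_append_ofFn {l : ℕ} (A : List ℚ) (g : Fin l → ℚ) :
    vprod (A ++ List.ofFn g) =
      vprod A * vprod (List.ofFn g) * ∏ t, (A.map fun a => g t - a).prod := by
  rw [vprod_append, ← List.prod_map_finsetProd]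
  simp only [List.map_ofFn, List.prod_ofFn, Function.comp_def]

theorem vprod_append_ofFn_div {l : ℕ} (A : List ℚ) (g s : Fin l → ℚ) (hA : vprod A ≠ 0)
    (hs : vprod (List.ofFn s) ≠ 0) (hsA : ∀ t, s t ∉ A) :
    vprod (A ++ List.ofFn g) / vprod (A ++ List.ofFn s) =
      (∏ t, vprod (A ++ [g t]) / vprod (A ++ [s t])) *
        (vprod (List.ofFn g) / vprod (List.ofFn s)) := by
  have hcross (t : Fin l) : (A.map fun a => s t - a).prod ≠ 0 := prod_map_sub_ne_zero (hsA t)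
  simp only [vprod_append_ofFn, vprod_append_singleton, Finset.prod_div_distrib,
    Finset.prod_mul_distrib]
  field_simp

-- The cast in `baseList` elaborates through the list monad: `List.range n >>= pure ∘ Nat.cast`.
lemma baseList_eq (n : ℕ) : baseList n = (List.range n).map fun k : ℕ => (k : ℚ) + 1 :=
  (congrArg _ (List.flatMap_pure_eq_map _ _)).trans (List.map_map ..)

lemma nodup_baseList (n : ℕ) : (baseList n).Nodup := by
  rw [baseList_eq]
  exact List.nodup_range.map fun a b h => by exact_mod_cast add_right_cancel h

lemma notMem_baseList_of_lt {n : ℕ} {x : ℚ} (hx : (n : ℚ) < x) : x ∉ baseList n := by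
  simp only [baseList_eq, List.mem_map, List.mem_range, not_exists, not_and]
  intro k hk hkx
  have : (k : ℚ) + 1 ≤ n := by exact_mod_cast hk
  linarith

theorem stmt10_general (n l : ℕ)
    (i : Fin l → ℕ) :
    vprod (baseList n ++ List.ofFn (fun t : Fin l => ((n : ℚ) + i t))) /
        vprod (baseList n ++ List.ofFn (fun t : Fin l => ((n : ℚ) + (t : ℕ) + 1))) =
      (∏ t : Fin l,
          vprod (baseList n ++ [((n : ℚ) + i t)]) /
            vprod (baseList n ++ [((n : ℚ) + (t : ℕ) + 1)])) *
        (vprod (List.ofFn (fun t : Fin l => ((n : ℚ) + i t))) /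
          vprod (List.ofFn (fun t : Fin l => ((n : ℚ) + (t : ℕ) + 1)))) := by
  refine vprod_append_ofFn_div _ _ _ (vprod_ne_zero (nodup_baseList n)) (vprod_ne_zero ?_)
    fun t => notMem_baseList_of_lt ?_
  · refine List.nodup_ofFn.2 fun a b h => Fin.ext ?_
    exact_mod_cast add_left_cancel (add_right_cancel h)
  · have : (0 : ℚ) ≤ (t : ℕ) := by positivity
    linarith

theorem stmt10 (n l : ℕ) (hn : 0 < n) (hl : 0 < l)
    (i : Fin l → ℕ) (hi : StrictMono i) (hipos : ∀ t, 0 < i t) :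
    vprod (baseList n ++ List.ofFn (fun t : Fin l => ((n : ℚ) + i t))) /
        vprod (baseList n ++ List.ofFn (fun t : Fin l => ((n : ℚ) + (t : ℕ) + 1))) =
      (∏ t : Fin l,
          vprod (baseList n ++ [((n : ℚ) + i t)]) /
            vprod (baseList n ++ [((n : ℚ) + (t : ℕ) + 1)])) *
        (vprod (List.ofFn (fun t : Fin l => ((n : ℚ) + i t))) /
          vprod (List.ofFn (fun t : Fin l => ((n : ℚ) + (t : ℕ) + 1)))) :=
  stmt10_general n l i
end

section
/- Let k be a positive integer and let i''_1 < i''_2 < ⋯ < i''_{2k} be positive integers. For integer a with a/2 ≥ k (a even), define f(a) = Δ(1, …, a/2−k, a/2−k+i''_1, …, a/2−k+i''_{2k}) / Δ(1, …, a/2−k, a/2−k+1, …, a/2−k+2k), where Δ is the Vandermonde product. Then f(a) agrees with a polynomial in a whose degree equals (i''_1 − 1) + (i''_2 − 2) + ⋯ + (i''_{2k} − 2k). -/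
/-!
Write `m = a/2 - k`. The Vandermonde product of a concatenation splits into the two blocks and
the cross differences; the block `1, …, m` cancels, the second block is translation invariant,
and the cross differences between `1, …, m` and `m + c` multiply to `c (c + 1) ⋯ (c + m - 1)`.
Hence `f(a)` is a nonzero constant times `∏_v ∏_{v < j < i''_v} (m + j) / j`, a product of
`∑_v (i''_v - v - 1)` linear factors in `a`.
-/

open Finset Polynomial

lemma Fin.val_lt_of_strictMono {n : ℕ} {f : Fin n → ℕ} (hf : StrictMono f)
    (hpos : ∀ v, 0 < f v) (v : Fin n) : (v : ℕ) < f v := by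
  obtain ⟨m, hm⟩ := v
  induction m with
  | zero => exact hpos _
  | succ m ih =>
    have hstep := hf (show (⟨m, by omega⟩ : Fin n) < ⟨m + 1, hm⟩ from Nat.lt_succ_self m)
    have hm' : m < f ⟨m, _⟩ := ih (by omega)
    show m + 1 < _
    omega

-- `baseList` elaborates by lifting `List.range m` to `List ℚ` through the list monad.
lemma baseList_eq_map_range (m : ℕ) :
    baseList m = (List.range m).map fun t : ℕ => (t : ℚ) + 1 := by
  simp only [baseList, List.bind_eq_flatMap, List.pure_def, ← List.map_eq_flatMap, List.map_map]
  rfl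

lemma prod_map_baseList (m : ℕ) (g : ℚ → ℚ) :
    ((baseList m).map g).prod = ∏ t ∈ range m, g (t + 1) := by
  rw [baseList_eq_map_range, List.map_map]
  rfl

lemma baseList_nodup (m : ℕ) : (baseList m).Nodup := by
  rw [baseList_eq_map_range]
  exact List.nodup_range.map fun s t hst => by simpa using hst

lemma prod_range_sub_eq_prod_Ico (m n : ℕ) :
    ∏ t ∈ range m, ((m : ℚ) + n - (t + 1)) = ∏ j ∈ Ico n (m + n), (j : ℚ) := by
  rw [prod_Ico_eq_prod_range, Nat.add_sub_cancel, ← prod_range_reflect]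
  refine prod_congr rfl fun t ht => ?_
  rw [mem_range] at ht
  rw [Nat.cast_add, Nat.cast_sub (by omega), Nat.cast_sub (by omega)]
  push_cast
  ring

lemma prod_Ico_add_div_prod_Ico (m n i : ℕ) (hn : 0 < n) (hni : n ≤ i) :
    (∏ j ∈ Ico i (m + i), (j : ℚ)) / ∏ j ∈ Ico n (m + n), (j : ℚ) =
      ∏ j ∈ Ico n i, ((m : ℚ) + j) / j := by
  have hne : ∀ {s t : ℕ}, 0 < s → ∏ j ∈ Ico s t, (j : ℚ) ≠ 0 := fun hs =>
    prod_ne_zero_iff.2 fun j hj => Nat.cast_ne_zero.2 (by have := (mem_Ico.1 hj).1; omega)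
  have hshift : ∏ j ∈ Ico n i, ((m : ℚ) + j) = ∏ j ∈ Ico (m + n) (m + i), (j : ℚ) := by
    rw [add_comm m n, add_comm m i, ← prod_Ico_add (fun j : ℕ => (j : ℚ))]
    push_cast
    rfl
  rw [prod_div_distrib, div_eq_div_iff (hne hn) (hne hn), hshift]
  calc (∏ j ∈ Ico i (m + i), (j : ℚ)) * ∏ j ∈ Ico n i, (j : ℚ)
      = ∏ j ∈ Ico n (m + i), (j : ℚ) := by
        rw [mul_comm, prod_Ico_consecutive _ hni (by omega)]
    _ = (∏ j ∈ Ico (m + n) (m + i), (j : ℚ)) * ∏ j ∈ Ico n (m + n), (j : ℚ) := by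
        rw [mul_comm, prod_Ico_consecutive _ (by omega) (by omega)]

namespace vprod

lemma append (L M : List ℚ) :
    vprod (L ++ M) = vprod L * vprod M * (L.map fun x => (M.map (· - x)).prod).prod := by
  induction L with
  | nil => simp [vprod]
  | cons x L ih =>
    simp only [List.cons_append, vprod, List.map_append, List.prod_append, ih,
      List.map_cons, List.prod_cons]
    ring

lemma map_add (c : ℚ) (L : List ℚ) : vprod (L.map (· + c)) = vprod L := by
  induction L with
  | nil => rfl
  | cons x L ih => simp [vprod, ih, Function.comp_def]

lemma ne_zero {L : List ℚ} (h : L.Nodup) : vprod L ≠ 0 := by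
  induction L with
  | nil => simp [vprod]
  | cons x L ih =>
    rw [List.nodup_cons] at h
    refine mul_ne_zero (List.prod_ne_zero ?_) (ih h.2)
    simp only [List.mem_map, sub_eq_zero, not_exists, not_and]
    exact fun y hy hyx => h.1 (hyx ▸ hy)

lemma baseList_append {n : ℕ} (m : ℕ) (c : Fin n → ℕ) :
    vprod (baseList m ++ List.ofFn fun v => (m : ℚ) + c v) =
      vprod (baseList m) * vprod (List.ofFn fun v => (c v : ℚ)) *
        ∏ v : Fin n, ∏ j ∈ Ico (c v) (m + c v), (j : ℚ) := by
  have hshift : List.ofFn (fun v => (m : ℚ) + c v) =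
      (List.ofFn fun v => (c v : ℚ)).map (· + (m : ℚ)) := by
    simp [List.map_ofFn, Function.comp_def, add_comm]
  rw [append, hshift, map_add, ← hshift, prod_map_baseList]
  simp only [List.map_ofFn, List.prod_ofFn, Function.comp_def, ← prod_range_sub_eq_prod_Ico]
  rw [prod_comm]

lemma baseList_append_div {n : ℕ} (m : ℕ) (i : Fin n → ℕ)
    (hi : ∀ v : Fin n, (v : ℕ) < i v) :
    vprod (baseList m ++ List.ofFn fun v => (m : ℚ) + i v) /
        vprod (baseList m ++ List.ofFn fun v : Fin n => (m : ℚ) + (v : ℕ) + 1) =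
      vprod (List.ofFn fun v => (i v : ℚ)) /
          vprod (List.ofFn fun v : Fin n => ((v + 1 : ℕ) : ℚ)) *
        ∏ v : Fin n, ∏ j ∈ Ico ((v : ℕ) + 1) (i v), ((m : ℚ) + j) / j := by
  have hden : (List.ofFn fun v : Fin n => (m : ℚ) + (v : ℕ) + 1) =
      List.ofFn fun v : Fin n => (m : ℚ) + ((v + 1 : ℕ) : ℚ) := by
    simp [add_assoc]
  rw [hden, baseList_append, baseList_append, mul_div_mul_comm,
    mul_div_mul_left _ _ (ne_zero (baseList_nodup m)), ← prod_div_distrib]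
  congr 1
  exact prod_congr rfl fun v _ => prod_Ico_add_div_prod_Ico m _ _ (by omega) (hi v)

end vprod

lemma degree_prod_C_mul_X_add_C {K ι : Type*} [Field K] (s : Finset ι) (a b : ι → K)
    (ha : ∀ i ∈ s, a i ≠ 0) :
    (∏ i ∈ s, (C (a i) * X + C (b i))).degree = (#s : WithBot ℕ) := by
  rw [degree_prod, sum_congr rfl fun i hi => degree_linear (ha i hi), sum_const, nsmul_one]

lemma cast_toNat_half_sub {a k : ℤ} (ha : 2 ∣ a) (hak : 2 * k ≤ a) :
    (((a / 2 - k).toNat : ℕ) : ℚ) = (a : ℚ) / 2 - k := by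
  obtain ⟨b, rfl⟩ := ha
  have hb : ((b - k).toNat : ℤ) = b - k := Int.toNat_of_nonneg (by omega)
  rw [show 2 * b / 2 = b by omega, ← Int.cast_natCast, hb]
  push_cast
  ring

theorem stmt12_general (k : ℕ)
    (i'' : Fin (2 * k) → ℕ) (hmono : StrictMono i'') (hpos : ∀ v, 0 < i'' v) :
    ∃ p : Polynomial ℚ,
      p.degree = ((∑ v : Fin (2 * k), (i'' v - ((v : ℕ) + 1)) : ℕ) : WithBot ℕ) ∧
      ∀ a : ℤ, 2 ∣ a → (2 * k : ℤ) ≤ a →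
        vprod (baseList ((a / 2 - k).toNat) ++
              List.ofFn (fun v : Fin (2 * k) => (((a / 2 - k).toNat : ℚ) + i'' v))) /
          vprod (baseList ((a / 2 - k).toNat) ++
              List.ofFn (fun v : Fin (2 * k) => (((a / 2 - k).toNat : ℚ) + (v : ℕ) + 1))) =
        p.eval (a : ℚ) := by
  have hlt := Fin.val_lt_of_strictMono hmono hpos
  set c := vprod (List.ofFn fun v => (i'' v : ℚ)) /
    vprod (List.ofFn fun v : Fin (2 * k) => ((v + 1 : ℕ) : ℚ))
  have hc : c ≠ 0 := div_ne_zero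
    (vprod.ne_zero (List.nodup_ofFn.2 (Nat.cast_injective.comp hmono.injective)))
    (vprod.ne_zero (List.nodup_ofFn.2 fun u v huv => Fin.ext (by simpa using huv)))
  refine ⟨C c * ∏ v : Fin (2 * k), ∏ j ∈ Ico ((v : ℕ) + 1) (i'' v),
    (C (1 / (2 * j) : ℚ) * X + C (((j : ℚ) - k) / j)), ?_, fun a ha hak => ?_⟩
  · rw [degree_C_mul hc, degree_prod, Nat.cast_sum]
    refine sum_congr rfl fun v _ => ?_
    rw [degree_prod_C_mul_X_add_C _ _ _ fun j hj => ?_, Nat.card_Ico]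
    have : 0 < j := by have := (mem_Ico.1 hj).1; omega
    positivity
  · rw [vprod.baseList_append_div _ _ hlt, cast_toNat_half_sub ha hak]
    simp only [eval_mul, eval_C, eval_prod, eval_add, eval_X]
    congr 1
    refine prod_congr rfl fun v _ => prod_congr rfl fun j hj => ?_
    have : (j : ℚ) ≠ 0 := Nat.cast_ne_zero.2 (by have := (mem_Ico.1 hj).1; omega)
    field_simp
    push_cast
    ring

theorem stmt12 (k : ℕ) (hk : 0 < k)
    (i'' : Fin (2 * k) → ℕ) (hmono : StrictMono i'') (hpos : ∀ v, 0 < i'' v) :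
    ∃ p : Polynomial ℚ,
      p.degree = ((∑ v : Fin (2 * k), (i'' v - ((v : ℕ) + 1)) : ℕ) : WithBot ℕ) ∧
      ∀ a : ℤ, 2 ∣ a → (2 * k : ℤ) ≤ a →
        vprod (baseList ((a / 2 - k).toNat) ++
              List.ofFn (fun v : Fin (2 * k) => (((a / 2 - k).toNat : ℚ) + i'' v))) /
          vprod (baseList ((a / 2 - k).toNat) ++
              List.ofFn (fun v : Fin (2 * k) => (((a / 2 - k).toNat : ℚ) + (v : ℕ) + 1))) =
        p.eval (a : ℚ) :=
  stmt12_general k i'' hmono hpos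
end

section
/- Let n_1 ≤ n_2 ≤ n_3 be nonnegative integers with n_3 ≤ n_1 + n_2, and let k be an integer with n_3 − n_2 ≤ k ≤ min(n_1, n_3). Then the quadratic expression Q(k) = −3k² + 3k·n_1 − n_1² − 3k·n_2 + 2n_1n_2 − n_2² + 3k·n_3 − n_1n_3 + 2n_2n_3 − n_3² attains its maximum over this integer range at k = ⌊(n_1 − n_2 + n_3)/2⌋ and at k = ⌈(n_1 − n_2 + n_3)/2⌉, and this maximum value equals ⌊(2n_1n_2 + 2n_1n_3 + 2n_2n_3 − n_1² − n_2² − n_3²)/4⌋. -/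
private lemma aux_eq (a b : ℤ) (h : 4 * a = b) : a = b / 4 := by omega

private lemma aux_eq3 (a b : ℤ) (h : 4 * a = b - 3) : a = b / 4 := by omega

private lemma aux_le (a b c : ℤ) (h : 4 * a ≤ b) (h2 : 4 * c = b) : a ≤ b / 4 := by omega

private lemma aux_le3 (a b c : ℤ) (h : 4 * a ≤ b - 3) (h2 : 4 * c = b - 3) : a ≤ b / 4 := by
  omega

theorem stmt13 (n₁ n₂ n₃ : ℤ) (h0 : 0 ≤ n₁) (h12 : n₁ ≤ n₂) (h23 : n₂ ≤ n₃)
    (htri : n₃ ≤ n₁ + n₂) :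
    (∀ k : ℤ, n₃ - n₂ ≤ k → k ≤ min n₁ n₃ →
        -3 * k ^ 2 + 3 * k * n₁ - n₁ ^ 2 - 3 * k * n₂ + 2 * n₁ * n₂ - n₂ ^ 2 +
            3 * k * n₃ - n₁ * n₃ + 2 * n₂ * n₃ - n₃ ^ 2 ≤
          (2 * n₁ * n₂ + 2 * n₁ * n₃ + 2 * n₂ * n₃ - n₁ ^ 2 - n₂ ^ 2 - n₃ ^ 2) / 4) ∧
    (-3 * ((n₁ - n₂ + n₃) / 2) ^ 2 + 3 * ((n₁ - n₂ + n₃) / 2) * n₁ - n₁ ^ 2 -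
        3 * ((n₁ - n₂ + n₃) / 2) * n₂ + 2 * n₁ * n₂ - n₂ ^ 2 +
        3 * ((n₁ - n₂ + n₃) / 2) * n₃ - n₁ * n₃ + 2 * n₂ * n₃ - n₃ ^ 2 =
      (2 * n₁ * n₂ + 2 * n₁ * n₃ + 2 * n₂ * n₃ - n₁ ^ 2 - n₂ ^ 2 - n₃ ^ 2) / 4) ∧
    (-3 * ((n₁ - n₂ + n₃ + 1) / 2) ^ 2 + 3 * ((n₁ - n₂ + n₃ + 1) / 2) * n₁ - n₁ ^ 2 -
        3 * ((n₁ - n₂ + n₃ + 1) / 2) * n₂ + 2 * n₁ * n₂ - n₂ ^ 2 +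
        3 * ((n₁ - n₂ + n₃ + 1) / 2) * n₃ - n₁ * n₃ + 2 * n₂ * n₃ - n₃ ^ 2 =
      (2 * n₁ * n₂ + 2 * n₁ * n₃ + 2 * n₂ * n₃ - n₁ ^ 2 - n₂ ^ 2 - n₃ ^ 2) / 4) := by
  rcases Int.even_or_odd (n₁ - n₂ + n₃) with ⟨q, hq⟩ | ⟨q, hq⟩
  · have hd1 : (n₁ - n₂ + n₃) / 2 = q := by omega
    have hd2 : (n₁ - n₂ + n₃ + 1) / 2 = q := by omega
    have hQq : 4 * (-3 * q ^ 2 + 3 * q * n₁ - n₁ ^ 2 - 3 * q * n₂ + 2 * n₁ * n₂ - n₂ ^ 2 +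
        3 * q * n₃ - n₁ * n₃ + 2 * n₂ * n₃ - n₃ ^ 2) =
        2 * n₁ * n₂ + 2 * n₁ * n₃ + 2 * n₂ * n₃ - n₁ ^ 2 - n₂ ^ 2 - n₃ ^ 2 := by
      have : n₃ = q + q - n₁ + n₂ := by omega
      subst this; ring
    refine ⟨?_, by rw [hd1]; exact aux_eq _ _ hQq, by rw [hd2]; exact aux_eq _ _ hQq⟩
    intro k _ _
    refine aux_le _ _ _ ?_ hQq
    nlinarith [sq_nonneg (k - q)]
  · have hd1 : (n₁ - n₂ + n₃) / 2 = q := by omega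
    have hd2 : (n₁ - n₂ + n₃ + 1) / 2 = q + 1 := by omega
    have hQq : 4 * (-3 * q ^ 2 + 3 * q * n₁ - n₁ ^ 2 - 3 * q * n₂ + 2 * n₁ * n₂ - n₂ ^ 2 +
        3 * q * n₃ - n₁ * n₃ + 2 * n₂ * n₃ - n₃ ^ 2) =
        (2 * n₁ * n₂ + 2 * n₁ * n₃ + 2 * n₂ * n₃ - n₁ ^ 2 - n₂ ^ 2 - n₃ ^ 2) - 3 := by
      have : n₃ = 2 * q + 1 - n₁ + n₂ := by omega
      subst this; ring
    have hQq1 : 4 * (-3 * (q + 1) ^ 2 + 3 * (q + 1) * n₁ - n₁ ^ 2 - 3 * (q + 1) * n₂ +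
        2 * n₁ * n₂ - n₂ ^ 2 + 3 * (q + 1) * n₃ - n₁ * n₃ + 2 * n₂ * n₃ - n₃ ^ 2) =
        (2 * n₁ * n₂ + 2 * n₁ * n₃ + 2 * n₂ * n₃ - n₁ ^ 2 - n₂ ^ 2 - n₃ ^ 2) - 3 := by
      have : n₃ = 2 * q + 1 - n₁ + n₂ := by omega
      subst this; ring
    refine ⟨?_, by rw [hd1]; exact aux_eq3 _ _ hQq, by rw [hd2]; exact aux_eq3 _ _ hQq1⟩
    intro k _ _
    refine aux_le3 _ _ _ ?_ hQq
    have hu : 0 ≤ (k - q) * (k - q - 1) := by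
      rcases le_or_gt k q with h | h
      · nlinarith [mul_nonneg (show (0:ℤ) ≤ q - k by omega) (show (0:ℤ) ≤ q + 1 - k by omega)]
      · exact mul_nonneg (by omega) (by omega)
    nlinarith [hu]
end
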